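/- Let α > 0, β > 0, set γ = 1 + (1/2)√(1+4α), and let m ∈ ℕ. Define ψ : (0,∞) → ℝ by ψ(ξ) = ξ^{γ-1/2} · e^{-β ξ²/2} · L_m^{(γ-1)}(β ξ²). Then ψ is smooth on (0,∞) and for every ξ > 0 one has -ψ''(ξ) + β² ξ² ψ(ξ) + (α/ξ²) ψ(ξ) = 2β(2m+γ) ψ(ξ); i.e., ψ is an eigenfunction of the Gol'dman–Krivchenkov Hamiltonian Δ_{α,β} = -d²/dξ² + β²ξ² + α/ξ² with eigenvalue 2β(2m+γ). -/

import Mathlib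

open MeasureTheory Real Set

noncomputable section

/-- Generalized Laguerre polynomial `L_m^{(ν)}(u)`. -/
def laguerreP (ν : ℝ) (m : ℕ) (u : ℝ) : ℝ :=
  ∑ k ∈ Finset.range (m + 1),
    ((-1 : ℝ) ^ k / k.factorial) *
      (Real.Gamma (m + ν + 1) / (Real.Gamma (k + ν + 1) * (m - k).factorial)) * u ^ k

namespace GKaux

def lagC (ν : ℝ) (m k : ℕ) : ℝ :=
  ((-1 : ℝ) ^ k / k.factorial) *
      (Real.Gamma (m + ν + 1) / (Real.Gamma (k + ν + 1) * (m - k).factorial))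

lemma laguerreP_eq (ν : ℝ) (m : ℕ) (u : ℝ) :
    laguerreP ν m u = ∑ k ∈ Finset.range (m + 1), lagC ν m k * u ^ k := rfl

def lagD1 (ν : ℝ) (m : ℕ) (u : ℝ) : ℝ :=
  ∑ k ∈ Finset.range (m + 1), lagC ν m k * (k * u ^ (k - 1))

def lagD2 (ν : ℝ) (m : ℕ) (u : ℝ) : ℝ :=
  ∑ k ∈ Finset.range (m + 1), lagC ν m k * (k * (((k - 1 : ℕ) : ℝ) * u ^ (k - 1 - 1)))

lemma hasDerivAt_laguerreP (ν : ℝ) (m : ℕ) (u : ℝ) :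
    HasDerivAt (laguerreP ν m) (lagD1 ν m u) u := by
  have : ∀ k ∈ Finset.range (m + 1),
      HasDerivAt (fun u : ℝ => lagC ν m k * u ^ k) (lagC ν m k * (k * u ^ (k - 1))) u :=
    fun k _ => (hasDerivAt_pow k u).const_mul _
  exact HasDerivAt.fun_sum this

lemma hasDerivAt_lagD1 (ν : ℝ) (m : ℕ) (u : ℝ) :
    HasDerivAt (lagD1 ν m) (lagD2 ν m u) u := by
  have : ∀ k ∈ Finset.range (m + 1),
      HasDerivAt (fun u : ℝ => lagC ν m k * (k * u ^ (k - 1)))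
        (lagC ν m k * (k * (((k - 1 : ℕ) : ℝ) * u ^ (k - 1 - 1)))) u := by
    intro k _
    simpa [mul_assoc] using ((hasDerivAt_pow (k - 1) u).const_mul (k : ℝ)).const_mul (lagC ν m k)
  exact HasDerivAt.fun_sum this

lemma contDiff_laguerreP (ν : ℝ) (m : ℕ) : ContDiff ℝ (⊤ : ℕ∞) (laguerreP ν m) := by
  have : laguerreP ν m = fun u => ∑ k ∈ Finset.range (m + 1), lagC ν m k * u ^ k := rfl
  rw [this]
  exact ContDiff.sum fun k _ => contDiff_const.mul (contDiff_id.pow k)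

lemma lagC_rec (ν : ℝ) (hν : 0 < ν) (m k : ℕ) (hk : k < m) :
    lagC ν m (k + 1) * ((k + 1) * (k + 1 + ν)) + lagC ν m k * ((m : ℝ) - k) = 0 := by
  have hG : Real.Gamma ((k + 1 : ℕ) + ν + 1) = ((k : ℝ) + ν + 1) * Real.Gamma ((k : ℝ) + ν + 1) := by
    have h : ((k : ℝ) + ν + 1) ≠ 0 := by positivity
    have := Real.Gamma_add_one h
    push_cast
    rw [show (k : ℝ) + 1 + ν + 1 = ((k : ℝ) + ν + 1) + 1 by ring, this]
  have hGpos : 0 < Real.Gamma ((k : ℝ) + ν + 1) := Real.Gamma_pos_of_pos (by positivity)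
  have hfac : ((m - k).factorial : ℝ) = ((m : ℝ) - k) * ((m - (k + 1)).factorial : ℝ) := by
    have h1 : m - k = (m - (k + 1)) + 1 := by omega
    rw [h1, Nat.factorial_succ]
    push_cast
    have : ((m - (k+1) : ℕ) : ℝ) = (m : ℝ) - k - 1 := by
      have h2 : k + 1 ≤ m := hk
      push_cast [Nat.cast_sub h2]
      ring
    rw [this]; ring
  have hfk : ((k + 1).factorial : ℝ) = ((k : ℝ) + 1) * (k.factorial : ℝ) := by
    rw [Nat.factorial_succ]; push_cast; ring
  have hmk : (0:ℝ) < (m:ℝ) - k := by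
    have : (k:ℝ) < m := by exact_mod_cast hk
    linarith
  have hf1 : ((m - (k+1)).factorial : ℝ) ≠ 0 := by positivity
  have hf2 : (k.factorial : ℝ) ≠ 0 := by positivity
  simp only [lagC, hG, hfac, hfk, pow_succ]
  field_simp
  ring

lemma laguerre_ode (ν : ℝ) (hν : 0 < ν) (m : ℕ) (u : ℝ) :
    u * lagD2 ν m u + (ν + 1 - u) * lagD1 ν m u + m * laguerreP ν m u = 0 := by
  rw [laguerreP_eq]
  have hA : u * lagD2 ν m u + (ν + 1) * lagD1 ν m u
      = ∑ k ∈ Finset.range (m + 1), (lagC ν m k * ((k : ℝ) * ((k : ℝ) + ν))) * u ^ (k - 1) := by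
    simp only [lagD1, lagD2, Finset.mul_sum, ← Finset.sum_add_distrib]
    refine Finset.sum_congr rfl fun k _ => ?_
    match k with
    | 0 => simp
    | 1 => push_cast; ring
    | (j+2) =>
      simp only [show j+2-1 = j+1 from rfl, show j+2-1-1 = j from rfl]
      push_cast [pow_succ]
      ring
  have hB : (m : ℝ) * (∑ k ∈ Finset.range (m + 1), lagC ν m k * u ^ k) - u * lagD1 ν m u
      = ∑ k ∈ Finset.range (m + 1), (lagC ν m k * ((m : ℝ) - (k : ℝ))) * u ^ k := by
    simp only [lagD1, Finset.mul_sum, ← Finset.sum_sub_distrib]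
    refine Finset.sum_congr rfl fun k _ => ?_
    match k with
    | 0 => simp [mul_comm]
    | (j+1) =>
      simp only [show j+1-1 = j from rfl]
      push_cast [pow_succ]
      ring
  have hA' : ∑ k ∈ Finset.range (m + 1), (lagC ν m k * ((k : ℝ) * ((k : ℝ) + ν))) * u ^ (k - 1)
      = ∑ k ∈ Finset.range m, (lagC ν m (k+1) * (((k:ℝ) + 1) * ((k:ℝ) + 1 + ν))) * u ^ k := by
    rw [Finset.sum_range_succ']
    simp
  have hB' : ∑ k ∈ Finset.range (m + 1), (lagC ν m k * ((m : ℝ) - (k : ℝ))) * u ^ k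
      = ∑ k ∈ Finset.range m, (lagC ν m k * ((m : ℝ) - (k : ℝ))) * u ^ k := by
    rw [Finset.sum_range_succ]
    simp
  have key : ∑ k ∈ Finset.range m, (lagC ν m (k+1) * (((k:ℝ) + 1) * ((k:ℝ) + 1 + ν))) * u ^ k
      + ∑ k ∈ Finset.range m, (lagC ν m k * ((m : ℝ) - (k : ℝ))) * u ^ k = 0 := by
    rw [← Finset.sum_add_distrib]
    refine Finset.sum_eq_zero fun k hk => ?_
    rw [← add_mul]
    rw [show lagC ν m (k+1) * (((k:ℝ) + 1) * ((k:ℝ) + 1 + ν)) + lagC ν m k * ((m : ℝ) - (k : ℝ)) = 0 by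
      · have := lagC_rec ν hν m k (Finset.mem_range.mp hk); push_cast at this ⊢; linarith]
    ring
  nlinarith [hA, hB, hA', hB', key]

def lagG (ν : ℝ) (m : ℕ) (u : ℝ) : ℝ := Real.exp (-u / 2) * laguerreP ν m u

def lagG1 (ν : ℝ) (m : ℕ) (u : ℝ) : ℝ :=
  Real.exp (-u / 2) * (-(1/2) * laguerreP ν m u + lagD1 ν m u)

def lagG2 (ν : ℝ) (m : ℕ) (u : ℝ) : ℝ :=
  Real.exp (-u / 2) * ((1/4) * laguerreP ν m u - lagD1 ν m u + lagD2 ν m u)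

lemma hasDerivAt_exp_half (u : ℝ) :
    HasDerivAt (fun u : ℝ => Real.exp (-u / 2)) (Real.exp (-u / 2) * (-(1/2))) u := by
  have h : HasDerivAt (fun u : ℝ => -u / 2) (-(1/2)) u := by
    have := (hasDerivAt_neg u).div_const 2
    exact this.congr_deriv (by norm_num)
  exact h.exp

lemma hasDerivAt_lagG (ν : ℝ) (m : ℕ) (u : ℝ) :
    HasDerivAt (lagG ν m) (lagG1 ν m u) u := by
  have := (hasDerivAt_exp_half u).mul (hasDerivAt_laguerreP ν m u)
  have h2 : lagG1 ν m u = Real.exp (-u/2) * (-(1/2)) * laguerreP ν m u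
      + Real.exp (-u/2) * lagD1 ν m u := by
    simp only [lagG1]; ring
  rw [show lagG ν m = fun u => Real.exp (-u/2) * laguerreP ν m u from rfl, h2]
  exact this

lemma hasDerivAt_lagG1 (ν : ℝ) (m : ℕ) (u : ℝ) :
    HasDerivAt (lagG1 ν m) (lagG2 ν m u) u := by
  have hin : HasDerivAt (fun u => -(1/2) * laguerreP ν m u + lagD1 ν m u)
      (-(1/2) * lagD1 ν m u + lagD2 ν m u) u :=
    ((hasDerivAt_laguerreP ν m u).const_mul (-(1/2))).add (hasDerivAt_lagD1 ν m u)
  have := (hasDerivAt_exp_half u).mul hin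
  have h2 : lagG2 ν m u = Real.exp (-u/2) * (-(1/2)) * (-(1/2) * laguerreP ν m u + lagD1 ν m u)
      + Real.exp (-u/2) * (-(1/2) * lagD1 ν m u + lagD2 ν m u) := by
    simp only [lagG2]; ring
  rw [show lagG1 ν m = fun u => Real.exp (-u/2) * (-(1/2) * laguerreP ν m u + lagD1 ν m u) from rfl, h2]
  exact this

lemma contDiff_lagG (ν : ℝ) (m : ℕ) : ContDiff ℝ (⊤ : ℕ∞) (lagG ν m) :=
  (Real.contDiff_exp.comp (contDiff_id.neg.div_const 2)).mul (contDiff_laguerreP ν m)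

lemma keyG (ν : ℝ) (hν : 0 < ν) (m : ℕ) (u : ℝ) :
    4 * u * lagG2 ν m u + 4 * (ν + 1) * lagG1 ν m u
      + (4 * m + 2 * (ν + 1) - u) * lagG ν m u = 0 := by
  have h := laguerre_ode ν hν m u
  simp only [lagG, lagG1, lagG2]
  linear_combination (4 * Real.exp (-u / 2)) * h

end GKaux

open GKaux

theorem goldman_krivchenkov_eigenfunction
    (α β : ℝ) (hα : 0 < α) (hβ : 0 < β)
    (γ : ℝ) (hγ : γ = 1 + (1 / 2) * Real.sqrt (1 + 4 * α)) (m : ℕ)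
    (ψ : ℝ → ℝ)
    (hψ : ∀ ξ : ℝ, ψ ξ =
      ξ ^ (γ - 1 / 2) * Real.exp (-β * ξ ^ 2 / 2) * laguerreP (γ - 1) m (β * ξ ^ 2)) :
    ContDiffOn ℝ (⊤ : ℕ∞) ψ (Set.Ioi 0) ∧
    ∀ ξ ∈ Set.Ioi (0 : ℝ),
      -(deriv (deriv ψ) ξ) + β ^ 2 * ξ ^ 2 * ψ ξ + (α / ξ ^ 2) * ψ ξ
        = 2 * β * (2 * m + γ) * ψ ξ := by
  have hs : Real.sqrt (1 + 4 * α) ^ 2 = 1 + 4 * α := Real.sq_sqrt (by linarith)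
  have hspos : 0 < Real.sqrt (1 + 4 * α) := Real.sqrt_pos.mpr (by linarith)
  have hν : 0 < γ - 1 := by rw [hγ]; linarith
  have hαa : α = (γ - 1/2) * ((γ - 1/2) - 1) := by rw [hγ]; nlinarith [hs]
  have hF : ψ = fun x : ℝ => x ^ (γ - 1/2) * lagG (γ - 1) m (β * x ^ 2) := by
    funext x
    rw [hψ x]
    simp only [lagG, neg_mul, mul_assoc]
  -- smoothness
  have hsmooth : ContDiffOn ℝ (⊤ : ℕ∞) ψ (Set.Ioi 0) := by
    rw [hF]
    intro x hx
    have h1 : ContDiffAt ℝ (⊤ : ℕ∞) (fun x : ℝ => x ^ (γ - 1/2)) x :=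
      Real.contDiffAt_rpow_const_of_ne (ne_of_gt hx)
    have h2 : ContDiff ℝ (⊤ : ℕ∞) (fun x : ℝ => lagG (γ - 1) m (β * x ^ 2)) :=
      (contDiff_lagG (γ - 1) m).comp (contDiff_const.mul (contDiff_id.pow 2))
    exact (h1.mul h2.contDiffAt).contDiffWithinAt
  refine ⟨hsmooth, fun ξ hξ => ?_⟩
  have hξ0 : (0:ℝ) < ξ := hξ
  have hξne : ξ ≠ 0 := ne_of_gt hξ0
  -- first derivative
  set ψ1 : ℝ → ℝ := fun x =>
    (γ - 1/2) * x ^ (γ - 1/2 - 1) * lagG (γ - 1) m (β * x ^ 2)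
      + x ^ (γ - 1/2) * (lagG1 (γ - 1) m (β * x ^ 2) * (β * (2 * x ^ 1)))
    with hψ1def
  have hq : ∀ x : ℝ, HasDerivAt (fun x : ℝ => β * x ^ 2) (β * (2 * x ^ 1)) x := by
    intro x
    simpa using (hasDerivAt_pow 2 x).const_mul β
  have hd1 : ∀ x : ℝ, x ≠ 0 → HasDerivAt ψ (ψ1 x) x := by
    intro x hx
    rw [hF]
    exact (Real.hasDerivAt_rpow_const (Or.inl hx)).mul
      (by have h := (hasDerivAt_lagG (γ - 1) m (β * x ^ 2)).comp x (hq x); exact h)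
  have e1 : Set.EqOn (deriv ψ) ψ1 (Set.Ioi 0) := fun x hx => (hd1 x (ne_of_gt hx)).deriv
  have e2 : deriv ψ =ᶠ[nhds ξ] ψ1 :=
    Filter.eventuallyEq_of_mem (isOpen_Ioi.mem_nhds hξ) e1
  -- second derivative
  have hd2 : HasDerivAt ψ1
      (((γ - 1/2) * ((γ - 1/2 - 1) * ξ ^ (γ - 1/2 - 1 - 1))) * lagG (γ - 1) m (β * ξ ^ 2)
        + ((γ - 1/2) * ξ ^ (γ - 1/2 - 1)) * (lagG1 (γ - 1) m (β * ξ ^ 2) * (β * (2 * ξ ^ 1)))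
        + (((γ - 1/2) * ξ ^ (γ - 1/2 - 1)) * (lagG1 (γ - 1) m (β * ξ ^ 2) * (β * (2 * ξ ^ 1)))
          + ξ ^ (γ - 1/2) * ((lagG2 (γ - 1) m (β * ξ ^ 2) * (β * (2 * ξ ^ 1))) * (β * (2 * ξ ^ 1))
            + lagG1 (γ - 1) m (β * ξ ^ 2) * (β * (2 * 1))))) ξ := by
    have hf1 : HasDerivAt
        (fun x : ℝ => (γ - 1/2) * x ^ (γ - 1/2 - 1) * lagG (γ - 1) m (β * x ^ 2))
        (((γ - 1/2) * ((γ - 1/2 - 1) * ξ ^ (γ - 1/2 - 1 - 1))) * lagG (γ - 1) m (β * ξ ^ 2)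
          + ((γ - 1/2) * ξ ^ (γ - 1/2 - 1)) * (lagG1 (γ - 1) m (β * ξ ^ 2) * (β * (2 * ξ ^ 1)))) ξ :=
      ((Real.hasDerivAt_rpow_const (Or.inl hξne)).const_mul (γ - 1/2)).mul
        (by have h := (hasDerivAt_lagG (γ - 1) m (β * ξ ^ 2)).comp ξ (hq ξ); exact h)
    have h3 : HasDerivAt (fun x : ℝ => β * (2 * x ^ 1)) (β * (2 * 1)) ξ := by
      simpa using (((hasDerivAt_id ξ).const_mul (2:ℝ)).const_mul β)
    have hin : HasDerivAt (fun x : ℝ => lagG1 (γ - 1) m (β * x ^ 2) * (β * (2 * x ^ 1)))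
        ((lagG2 (γ - 1) m (β * ξ ^ 2) * (β * (2 * ξ ^ 1))) * (β * (2 * ξ ^ 1))
          + lagG1 (γ - 1) m (β * ξ ^ 2) * (β * (2 * 1))) ξ :=
      (show HasDerivAt (fun x : ℝ => lagG1 (γ - 1) m (β * x ^ 2)) (lagG2 (γ - 1) m (β * ξ ^ 2) * (β * (2 * ξ ^ 1))) ξ by
        have h := (hasDerivAt_lagG1 (γ - 1) m (β * ξ ^ 2)).comp ξ (hq ξ); exact h).mul h3
    have hf2 : HasDerivAt
        (fun x : ℝ => x ^ (γ - 1/2) * (lagG1 (γ - 1) m (β * x ^ 2) * (β * (2 * x ^ 1))))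
        (((γ - 1/2) * ξ ^ (γ - 1/2 - 1)) * (lagG1 (γ - 1) m (β * ξ ^ 2) * (β * (2 * ξ ^ 1)))
          + ξ ^ (γ - 1/2) * ((lagG2 (γ - 1) m (β * ξ ^ 2) * (β * (2 * ξ ^ 1))) * (β * (2 * ξ ^ 1))
            + lagG1 (γ - 1) m (β * ξ ^ 2) * (β * (2 * 1)))) ξ :=
      (Real.hasDerivAt_rpow_const (Or.inl hξne)).mul hin
    simpa [hψ1def] using hf1.fun_add hf2
  have hdd : deriv (deriv ψ) ξ =
      ((γ - 1/2) * ((γ - 1/2 - 1) * ξ ^ (γ - 1/2 - 1 - 1))) * lagG (γ - 1) m (β * ξ ^ 2)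
        + ((γ - 1/2) * ξ ^ (γ - 1/2 - 1)) * (lagG1 (γ - 1) m (β * ξ ^ 2) * (β * (2 * ξ ^ 1)))
        + (((γ - 1/2) * ξ ^ (γ - 1/2 - 1)) * (lagG1 (γ - 1) m (β * ξ ^ 2) * (β * (2 * ξ ^ 1)))
          + ξ ^ (γ - 1/2) * ((lagG2 (γ - 1) m (β * ξ ^ 2) * (β * (2 * ξ ^ 1))) * (β * (2 * ξ ^ 1))
            + lagG1 (γ - 1) m (β * ξ ^ 2) * (β * (2 * 1)))) := by
    rw [e2.deriv_eq]; exact hd2.deriv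
  rw [hdd]
  have hψx : ψ ξ = ξ ^ (γ - 1/2) * lagG (γ - 1) m (β * ξ ^ 2) := by rw [hF]
  rw [hψx]
  have hx3 : ξ ^ (γ - 1/2) = ξ ^ (γ - 1/2 - 1) * ξ := by
    have h := Real.rpow_add_one hξne (γ - 1/2 - 1)
    rw [show γ - 1/2 - 1 + 1 = γ - 1/2 by ring] at h
    exact h
  have hx2 : ξ ^ (γ - 1/2 - 1) = ξ ^ (γ - 1/2 - 1 - 1) * ξ := by
    have h := Real.rpow_add_one hξne (γ - 1/2 - 1 - 1)
    rw [show γ - 1/2 - 1 - 1 + 1 = γ - 1/2 - 1 by ring] at h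
    exact h
  rw [hx3, hx2]
  have hdiv : α / ξ ^ 2 * (ξ ^ (γ - 1/2 - 1 - 1) * ξ * ξ * lagG (γ - 1) m (β * ξ ^ 2))
      = (γ - 1/2) * ((γ - 1/2) - 1) * (ξ ^ (γ - 1/2 - 1 - 1) * lagG (γ - 1) m (β * ξ ^ 2)) := by
    rw [hαa]; field_simp
  rw [hdiv]
  have hkey := keyG (γ - 1) hν m (β * ξ ^ 2)
  linear_combination (-(β * ξ ^ (γ - 1/2 - 1 - 1) * ξ ^ 2)) * hkey
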